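/- Let n ≥ 2, let δ ∈ (0, 1) be a constant, and set ζ = (3/4)(1 + δ). Consider the UMDA with parameters μ and λ optimizing LeadingOnes on {0,1}^n, where μ ≥ 6·((1 + δ)/δ²)·ln n and λ ≥ μ·max{1, 1/ζ}. Let d = ⌈log_{4/3}(ζ λ/μ)⌉. Consider an iteration t such that position i ∈ [n] is critical and such that p_j^(t) ≤ 3/4 for all positions j > i. Then, with probability at least 1 − 1/n², the maximum selection-relevant position in iteration t is at most min{n, i + d + 1}. -/

import Mathlib

/-!
Formalization of the UMDA (univariate marginal distribution algorithm) with parameters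
`μ ≤ lam` maximizing a fitness function `f : (Fin n → Bool) → ℝ`.

The algorithm is modeled as a deterministic function of driving randomness: in each
iteration `t`, the fresh randomness `step t` consists of `lam · n` independent uniform
random numbers in `[0,1]` (the population is sampled from the current frequency vector
by thresholding these uniforms, so that each bit is `1` with probability equal to the
corresponding frequency, independently) together with an independent uniformly random
permutation of `Fin lam` that is used to break ties in the selection of the `μ` best
individuals uniformly at random.  The randomness of different iterations is independent.

Positions: we index positions by `Fin n` (0-based), so `i : Fin n` represents the
(1-based) position `i + 1 ∈ [n]` of the paper.
-/

open MeasureTheory ProbabilityTheory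
open scoped ENNReal

noncomputable section

namespace UMDA

/-- The number of leading ones of a bit string `x : Fin n → Bool`,
`LO(x) = ∑_{i=1}^n ∏_{j=1}^i x_j`. -/
def leadingOnes {n : ℕ} (x : Fin n → Bool) : ℕ :=
  (Finset.univ.filter fun i : Fin n => ∀ j : Fin n, j ≤ i → x j = true).card

/-- The `LeadingOnes` fitness function (real-valued). -/
def lo (n : ℕ) : (Fin n → Bool) → ℝ := fun x => leadingOnes x

/-- The all-ones bit string, the unique global optimum of `LeadingOnes`. -/
def allOnes (n : ℕ) : Fin n → Bool := fun _ => true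

open Classical in
/-- The population of `lam` individuals sampled from the frequency vector `p` by
thresholding the uniform random numbers `u`: bit `i` of individual `k` is `1` iff
`u k i < p i` (so it is `1` with probability `p i` for `p i ∈ [0,1]` and uniformly
distributed `u k i`). -/
def sample {n lam : ℕ} (p : Fin n → ℝ) (u : Fin lam → Fin n → ℝ) :
    Fin lam → Fin n → Bool :=
  fun k i => decide (u k i < p i)

/-- Individual (index) `j` beats individual `k` with respect to the fitness `f`:
it has strictly larger fitness, or equal fitness and a smaller rank in the
tie-breaking permutation `π`. -/
def Beats {n lam : ℕ} (f : (Fin n → Bool) → ℝ) (x : Fin lam → Fin n → Bool)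
    (π : Equiv.Perm (Fin lam)) (j k : Fin lam) : Prop :=
  f (x k) < f (x j) ∨ (f (x j) = f (x k) ∧ π j < π k)

open Classical in
/-- The indices of the `μ` best individuals of the population `x` with respect to `f`,
ties broken (uniformly at random) via the (uniformly random) permutation `π`:
an individual is selected iff fewer than `μ` individuals beat it. -/
def selected {n lam : ℕ} (f : (Fin n → Bool) → ℝ) (μ : ℕ)
    (x : Fin lam → Fin n → Bool) (π : Equiv.Perm (Fin lam)) : Finset (Fin lam) :=
  Finset.univ.filter fun k => (Finset.univ.filter fun j => Beats f x π j k).card < μ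

open Classical in
/-- The updated frequency vector: the relative number of ones at each position among the
`μ` selected individuals, clamped to the interval `[1/n, 1 - 1/n]`. -/
def update {n lam : ℕ} (f : (Fin n → Bool) → ℝ) (μ : ℕ)
    (x : Fin lam → Fin n → Bool) (π : Equiv.Perm (Fin lam)) : Fin n → ℝ :=
  fun i => max ((1 : ℝ) / n) (min (1 - (1 : ℝ) / n)
    (((((selected f μ x π).filter fun k => x k i = true)).card : ℝ) / (μ : ℝ)))

/-- The frequency vector `p^(t)` of the UMDA (with selection size `μ`, fitness `f`) at
the beginning of iteration `t`, as a deterministic function of the driving randomness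
`step`: `p^(0) = (1/2, …, 1/2)`, and `p^(t+1)` is obtained by sampling the population
of iteration `t` from `p^(t)`, selecting the `μ` best individuals (ties broken via the
permutation of `step t`) and taking the clamped relative numbers of ones. -/
def freq {n lam : ℕ} {Ω : Type*} (f : (Fin n → Bool) → ℝ) (μ : ℕ)
    (step : ℕ → Ω → (Fin lam → Fin n → ℝ) × Equiv.Perm (Fin lam)) :
    ℕ → Ω → Fin n → ℝ
  | 0 => fun _ _ => 1 / 2
  | t + 1 => fun ω =>
      update f μ (sample (freq f μ step t ω) (step t ω).1) (step t ω).2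

/-- The offspring population `x^(1), …, x^(lam)` sampled by the UMDA in iteration `t`. -/
def pop {n lam : ℕ} {Ω : Type*} (f : (Fin n → Bool) → ℝ) (μ : ℕ)
    (step : ℕ → Ω → (Fin lam → Fin n → ℝ) × Equiv.Perm (Fin lam))
    (t : ℕ) (ω : Ω) : Fin lam → Fin n → Bool :=
  sample (freq f μ step t ω) (step t ω).1

instance permMeasurableSpace (lam : ℕ) : MeasurableSpace (Equiv.Perm (Fin lam)) := ⊤

/-- The uniform distribution on `[0, 1] ⊆ ℝ`. -/
def unif01 : Measure ℝ := volume.restrict (Set.Icc 0 1)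

/-- The law of the fresh randomness used by the UMDA in a single iteration:
`lam · n` independent uniform random numbers in `[0,1]` together with an independent
uniformly random permutation of `Fin lam`. -/
def stepLaw (n lam : ℕ) :
    Measure ((Fin lam → Fin n → ℝ) × Equiv.Perm (Fin lam)) :=
  (Measure.pi fun _ : Fin lam => Measure.pi fun _ : Fin n => unif01).prod
    ((PMF.uniformOfFintype (Equiv.Perm (Fin lam))).toMeasure)

/-- A run of the UMDA with offspring population size `lam` on bit strings of length `n`,
carried by the probability space `Ω`: the driving randomness of the iterations is
independent, and in each iteration it has law `stepLaw n lam`. -/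
structure Model (n lam : ℕ) (Ω : Type*) [MeasureSpace Ω] where
  step : ℕ → Ω → (Fin lam → Fin n → ℝ) × Equiv.Perm (Fin lam)
  measurable_step : ∀ t, Measurable (step t)
  indep_step : iIndepFun step ℙ
  law_step : ∀ t, Measure.map (step t) ℙ = stepLaw n lam

/-- The fitness `f` weakly prefers a `1` at position `i`: flipping bit `i` from `0`
to `1` never decreases the fitness. -/
def WeaklyPrefersOne {n : ℕ} (f : (Fin n → Bool) → ℝ) (i : Fin n) : Prop :=
  ∀ x : Fin n → Bool, f (Function.update x i false) ≤ f (Function.update x i true)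

/-- Position `i : Fin n` (0-based, i.e., position `i + 1 ∈ [n]` of the paper) is
critical for the frequency vector `p`: all frequencies at smaller indices equal
`1 - 1/n` and the frequency at `i` is less than `1 - 1/n`. -/
def IsCritical {n : ℕ} (p : Fin n → ℝ) (i : Fin n) : Prop :=
  (∀ j : Fin n, j < i → p j = 1 - (1 : ℝ) / n) ∧ p i < 1 - (1 : ℝ) / n

/-- Position `i : Fin n` (0-based, i.e., position `i + 1 ∈ [n]` of the paper) is
selection-relevant (w.r.t. `LeadingOnes`) for the population `x`: at least `μ`
individuals have at least `(i + 1) - 1 = i` leading ones. -/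
def SelectionRelevant {n lam : ℕ} (μ : ℕ) (x : Fin lam → Fin n → Bool)
    (i : Fin n) : Prop :=
  μ ≤ (Finset.univ.filter fun k : Fin lam => (i : ℕ) ≤ leadingOnes (x k)).card

end UMDA
open UMDA

/-!
The frequencies `p⁽ᵗ⁾` are determined by the randomness of the iterations before `t`, hence
independent of the uniforms that sample the offspring of iteration `t`, so it suffices to bound
the probability for a fixed frequency vector `p` in the conditioning event. An offspring with at
least `i + d + 2` leading ones has ones at the `d + 1` positions following `i`, whose
frequencies are at most `3/4`; this has probability `q ≤ (3/4)^(d+1) ≤ μ / ((1 + δ) λ)` by the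
choice of `d`. The Chernoff bound with parameter `s = 2δ/3` shows that at least `μ` such
offspring occur with probability at most
`exp (λ (e^s - 1) q - s μ) ≤ exp (-δ² μ / (3 (1 + δ))) ≤ n⁻²`, and otherwise no position
beyond `i + d + 2` is selection-relevant.
-/
open Finset Real

section Chernoff

variable {ι α : Type*} [Fintype ι] [MeasurableSpace α] (ν : Measure α) [IsProbabilityMeasure ν]

lemma lintegral_pi_prod_eq_pow {g : α → ℝ≥0∞} (hg : Measurable g) :
    ∫⁻ u, ∏ k, g (u k) ∂(Measure.pi fun _ : ι => ν) = (∫⁻ x, g x ∂ν) ^ Fintype.card ι := by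
  rw [lintegral_prod_eq_prod_lintegral_of_indepFun _ _
    (iIndepFun_pi (X := fun _ => g) fun _ => hg.aemeasurable)
    fun k => hg.comp (measurable_pi_apply k)]
  simp_rw [(measurePreserving_eval (fun _ : ι => ν) _).lintegral_comp hg]
  rw [prod_const, card_univ]

lemma lintegral_ite_mem_le_exp {F : Set α} [DecidablePred (· ∈ F)] (hF : MeasurableSet F)
    {q s : ℝ} (hq0 : 0 ≤ q) (hq : ν F ≤ ENNReal.ofReal q) (hs : 0 ≤ s) :
    ∫⁻ v, (if v ∈ F then ENNReal.ofReal (exp s) else 1) ∂ν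
      ≤ ENNReal.ofReal (exp ((exp s - 1) * q)) := by
  have hes : 0 ≤ exp s - 1 := by linarith [one_le_exp hs]
  have hsplit : (fun v => if v ∈ F then ENNReal.ofReal (exp s) else 1)
      = fun v => F.indicator (fun _ => ENNReal.ofReal (exp s - 1)) v + 1 := by
    funext v
    by_cases hv : v ∈ F
    · rw [if_pos hv, Set.indicator_of_mem hv, ← ENNReal.ofReal_one,
        ← ENNReal.ofReal_add hes zero_le_one, sub_add_cancel]
    · simp [hv]
  rw [hsplit, lintegral_add_right _ measurable_const, lintegral_indicator_const hF,
    lintegral_one, measure_univ]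
  calc ENNReal.ofReal (exp s - 1) * ν F + 1
      ≤ ENNReal.ofReal (exp s - 1) * ENNReal.ofReal q + 1 := by gcongr
    _ = ENNReal.ofReal ((exp s - 1) * q + 1) := by
      rw [ENNReal.ofReal_add (mul_nonneg hes hq0) zero_le_one, ENNReal.ofReal_mul hes,
        ENNReal.ofReal_one]
    _ ≤ ENNReal.ofReal (exp ((exp s - 1) * q)) :=
      ENNReal.ofReal_le_ofReal (by linarith [add_one_le_exp ((exp s - 1) * q)])

/-- Chernoff bound: Markov's inequality for `exp (s · #{k | u k ∈ F})`. -/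
theorem measure_pi_le_card_filter_mem_le {F : Set α} [DecidablePred (· ∈ F)]
    (hF : MeasurableSet F) {q s : ℝ} (hq0 : 0 ≤ q) (hq : ν F ≤ ENNReal.ofReal q) (hs : 0 ≤ s)
    (m : ℕ) :
    (Measure.pi fun _ : ι => ν) {u | m ≤ #{k | u k ∈ F}}
      ≤ ENNReal.ofReal (exp (Fintype.card ι * ((exp s - 1) * q) - s * m)) := by
  set c := ENNReal.ofReal (exp s)
  set g : α → ℝ≥0∞ := fun v => if v ∈ F then c else 1
  have hc1 : 1 ≤ c := ENNReal.one_le_ofReal.2 (one_le_exp hs)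
  have hg : Measurable g := Measurable.ite hF measurable_const measurable_const
  have hprod : ∀ u : ι → α, c ^ #{k | u k ∈ F} = ∏ k, g (u k) := fun u => by
    simp [g, prod_ite]
  calc (Measure.pi fun _ : ι => ν) {u | m ≤ #{k | u k ∈ F}}
      ≤ (Measure.pi fun _ : ι => ν) {u | c ^ m ≤ ∏ k, g (u k)} :=
        measure_mono fun u (hu : m ≤ _) => show c ^ m ≤ _ from
          hprod u ▸ pow_le_pow_right₀ hc1 hu
    _ ≤ (∫⁻ u, ∏ k, g (u k) ∂(Measure.pi fun _ : ι => ν)) / c ^ m :=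
        meas_ge_le_lintegral_div (Finset.measurable_prod _ fun k _ =>
          hg.comp (measurable_pi_apply k)).aemeasurable
          (pow_ne_zero _ (zero_lt_one.trans_le hc1).ne') (ENNReal.pow_ne_top ENNReal.ofReal_ne_top)
    _ ≤ ENNReal.ofReal (exp ((exp s - 1) * q)) ^ Fintype.card ι / c ^ m := by
        rw [lintegral_pi_prod_eq_pow ν hg]
        gcongr
        exact lintegral_ite_mem_le_exp ν hF hq0 hq hs
    _ = ENNReal.ofReal (exp (Fintype.card ι * ((exp s - 1) * q) - s * m)) := by
        rw [← ENNReal.ofReal_pow (exp_pos _).le, ← ENNReal.ofReal_pow (exp_pos _).le,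
          ← exp_nat_mul, ← exp_nat_mul, ← ENNReal.ofReal_div_of_pos (exp_pos _), ← exp_sub,
          mul_comm (m : ℝ) s]

end Chernoff

lemma le_pow_of_logb_le {b x : ℝ} (hb : 1 < b) {d : ℕ} (hd : logb b x ≤ d) : x ≤ b ^ d := by
  rcases le_or_gt x 0 with hx | hx
  · exact hx.trans (pow_pos (zero_lt_one.trans hb) _).le
  calc x = b ^ logb b x := (rpow_logb (zero_lt_one.trans hb) hb.ne' hx).symm
    _ ≤ b ^ (d : ℝ) := rpow_le_rpow_of_exponent_le hb.le hd
    _ = b ^ d := rpow_natCast _ _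

lemma mul_three_quarters_pow_le {lam μ δ : ℝ} (hμ : 0 < μ) (hδ : 0 < 1 + δ) {d : ℕ}
    (hd : logb (4 / 3) (3 / 4 * (1 + δ) * lam / μ) ≤ d) :
    lam * (3 / 4) ^ (d + 1) ≤ μ / (1 + δ) := by
  have hpow := le_pow_of_logb_le (by norm_num) hd
  rw [div_le_iff₀ hμ] at hpow
  rw [le_div_iff₀ hδ]
  calc lam * (3 / 4) ^ (d + 1) * (1 + δ) = (3 / 4) ^ d * (3 / 4 * (1 + δ) * lam) := by ring
    _ ≤ (3 / 4) ^ d * ((4 / 3) ^ d * μ) := by gcongr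
    _ = μ := by rw [← mul_assoc, ← mul_pow]; norm_num

lemma exp_two_thirds_mul_sub_one_le {δ : ℝ} (hδ0 : 0 ≤ δ) (hδ1 : δ ≤ 1) :
    exp (2 * δ / 3) - 1 - 2 * δ / 3 * (1 + δ) ≤ -(δ ^ 2 / 3) := by
  have hexp := exp_bound' (x := 2 * δ / 3) (by positivity) (by linarith) (n := 3) (by norm_num)
  norm_num [Finset.sum_range_succ, Nat.factorial] at hexp
  nlinarith [mul_nonneg (mul_nonneg hδ0 hδ0) (sub_nonneg.2 hδ1)]

lemma exp_chernoff_exponent_le {x δ μ lam q : ℝ} (hx : 0 < x) (hδ0 : 0 < δ) (hδ1 : δ < 1)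
    (hμ0 : 0 ≤ μ) (hμ : 6 * ((1 + δ) / δ ^ 2) * log x ≤ μ) (hq : lam * q ≤ μ / (1 + δ)) :
    exp (lam * ((exp (2 * δ / 3) - 1) * q) - 2 * δ / 3 * μ) ≤ 1 / x ^ 2 := by
  have hes : 0 ≤ exp (2 * δ / 3) - 1 := by linarith [add_one_le_exp (2 * δ / 3)]
  have hscal := exp_two_thirds_mul_sub_one_le hδ0.le hδ1.le
  have hμ' : 2 * log x ≤ μ / (1 + δ) * (δ ^ 2 / 3) := by
    rw [div_mul_div_comm, le_div_iff₀ (by positivity)]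
    have h := mul_le_mul_of_nonneg_right hμ (sq_nonneg δ)
    rw [mul_right_comm, mul_assoc 6, div_mul_cancel₀ _ (by positivity)] at h
    linarith
  have hexponent : lam * ((exp (2 * δ / 3) - 1) * q) - 2 * δ / 3 * μ ≤ -(2 * log x) := by
    have h1 := mul_le_mul_of_nonneg_left hq hes
    have h2 := mul_le_mul_of_nonneg_left hscal (div_nonneg hμ0 (by linarith : (0 : ℝ) ≤ 1 + δ))
    have h3 : μ / (1 + δ) * (2 * δ / 3 * (1 + δ)) = 2 * δ / 3 * μ := by field_simp
    nlinarith
  calc exp (lam * ((exp (2 * δ / 3) - 1) * q) - 2 * δ / 3 * μ) ≤ exp (-(2 * log x)) :=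
        exp_le_exp.2 hexponent
    _ = 1 / x ^ 2 := by
        rw [show 2 * log x = log (x ^ 2) by rw [log_pow]; norm_num, exp_neg,
          exp_log (by positivity), one_div]

namespace UMDA

instance (lam : ℕ) : DiscreteMeasurableSpace (Equiv.Perm (Fin lam)) :=
  ⟨fun _ => trivial⟩

instance : IsProbabilityMeasure unif01 :=
  ⟨by simp [unif01]⟩

lemma unif01_Iio_le (x : ℝ) : unif01 (Set.Iio x) ≤ ENNReal.ofReal x := by
  rw [unif01, Measure.restrict_apply measurableSet_Iio]
  calc volume (Set.Iio x ∩ Set.Icc 0 1) ≤ volume (Set.Icc 0 x) :=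
        measure_mono fun v hv => ⟨hv.2.1, hv.1.le⟩
    _ = ENNReal.ofReal x := by simp

lemma measure_pi_unif01_pi_Iio_le {ι : Type*} [Fintype ι] (J : Finset ι) (p : ι → ℝ) :
    (Measure.pi fun _ : ι => unif01) ((J : Set ι).pi fun j => Set.Iio (p j))
      ≤ ∏ j ∈ J, ENNReal.ofReal (p j) := by
  rw [Measure.pi_pi_finset]
  exact prod_le_prod' fun j _ => unif01_Iio_le (p j)

variable {n lam : ℕ}

lemma apply_eq_true_of_lt_leadingOnes {x : Fin n → Bool} {j : Fin n}
    (h : (j : ℕ) < leadingOnes x) : x j = true := by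
  by_contra hx
  have : leadingOnes x ≤ j :=
    calc leadingOnes x ≤ #(Iio j) := card_le_card fun a ha =>
          mem_Iio.2 (lt_of_not_ge fun hja => hx ((mem_filter.1 ha).2 j hja))
      _ = j := Fin.card_Iio j
  omega

lemma SelectionRelevant.mono {μ : ℕ} {x : Fin lam → Fin n → Bool} {j k : Fin n}
    (h : SelectionRelevant μ x k) (hjk : j ≤ k) : SelectionRelevant μ x j :=
  h.trans (card_le_card (monotone_filter_right _ fun _ _ hl => le_trans hjk hl))

lemma measure_selectionRelevant_le (μ : ℕ) {p : Fin n → ℝ} {i k : Fin n} {a : ℝ}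
    (ha0 : 0 ≤ a) (ha : ∀ j, i < j → j < k → p j ≤ a) {s : ℝ} (hs : 0 ≤ s) :
    (Measure.pi fun _ : Fin lam => Measure.pi fun _ : Fin n => unif01)
        {u | SelectionRelevant μ (sample p u) k}
      ≤ ENNReal.ofReal (exp (lam * ((exp s - 1) * a ^ ((k : ℕ) - i - 1)) - s * μ)) := by
  classical
  set F : Set (Fin n → ℝ) := (Ioo i k : Set (Fin n)).pi fun j => Set.Iio (p j)
  have hF : MeasurableSet F := MeasurableSet.pi (Set.to_countable _) fun _ _ => measurableSet_Iio
  have hνF : (Measure.pi fun _ : Fin n => unif01) F ≤ ENNReal.ofReal (a ^ ((k : ℕ) - i - 1)) :=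
    calc _ ≤ ∏ j ∈ Ioo i k, ENNReal.ofReal (p j) := measure_pi_unif01_pi_Iio_le _ _
      _ ≤ ∏ j ∈ Ioo i k, ENNReal.ofReal a := prod_le_prod' fun j hj =>
          ENNReal.ofReal_le_ofReal (ha j (mem_Ioo.1 hj).1 (mem_Ioo.1 hj).2)
      _ = ENNReal.ofReal (a ^ ((k : ℕ) - i - 1)) := by
          rw [prod_const, Fin.card_Ioo, ENNReal.ofReal_pow ha0]
  have hsub : {u : Fin lam → Fin n → ℝ | SelectionRelevant μ (sample p u) k}
      ⊆ {u | μ ≤ #{l | u l ∈ F}} :=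
    fun u hu => hu.trans <| card_le_card <| monotone_filter_right _ fun l _ hl j hj =>
      of_decide_eq_true <| apply_eq_true_of_lt_leadingOnes
        (lt_of_lt_of_le (Fin.lt_def.1 (mem_Ioo.1 hj).2) hl)
  simpa using (measure_mono hsub).trans
    (measure_pi_le_card_filter_mem_le _ hF (pow_nonneg ha0 _) hνF hs μ)

lemma measure_selectionRelevant_le_one_div_sq (hn : 2 ≤ n) {δ : ℝ} (hδ0 : 0 < δ) (hδ1 : δ < 1)
    {μ : ℕ} (hμ : 6 * ((1 + δ) / δ ^ 2) * log n ≤ μ) {d : ℕ}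
    (hd : logb (4 / 3) (3 / 4 * (1 + δ) * lam / μ) ≤ d) {p : Fin n → ℝ} {i k : Fin n}
    (hp : ∀ j, i < j → p j ≤ 3 / 4) (hk : (k : ℕ) = i + 1 + d + 1) :
    (Measure.pi fun _ : Fin lam => Measure.pi fun _ : Fin n => unif01)
        {u | SelectionRelevant μ (sample p u) k}
      ≤ ENNReal.ofReal (1 / (n : ℝ) ^ 2) := by
  have hn0 : (0 : ℝ) < n := by positivity
  have hμ0 : (0 : ℝ) < μ :=
    (mul_pos (by positivity) (log_pos (by exact_mod_cast hn))).trans_le hμ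
  refine (measure_selectionRelevant_le μ (by norm_num) (fun j hij _ => hp j hij)
    (s := 2 * δ / 3) (by positivity)).trans (ENNReal.ofReal_le_ofReal ?_)
  rw [show (k : ℕ) - i - 1 = d + 1 by omega]
  exact exp_chernoff_exponent_le hn0 hδ0 hδ1 hμ0.le hμ
    (mul_three_quarters_pow_le hμ0 (by linarith) hd)

end UMDA

section Probability

variable {Ω α β : Type*} [MeasurableSpace Ω] [MeasurableSpace α] [MeasurableSpace β]
  {P : Measure Ω} [IsFiniteMeasure P]

lemma measure_preimage_inter_le_of_indepFun {X : Ω → α} {Y : Ω → β} (hX : Measurable X)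
    (hY : Measurable Y) (hXY : IndepFun X Y P) {s : Set α} (hs : MeasurableSet s)
    {T : Set (α × β)} (hT : MeasurableSet T) {ε : ℝ≥0∞}
    (hε : ∀ a ∈ s, P.map Y (Prod.mk a ⁻¹' T) ≤ ε) :
    P (X ⁻¹' s ∩ (fun ω => (X ω, Y ω)) ⁻¹' T) ≤ ε * P (X ⁻¹' s) := by
  have hsT : MeasurableSet (Prod.fst ⁻¹' s ∩ T) := (measurable_fst hs).inter hT
  calc P (X ⁻¹' s ∩ (fun ω => (X ω, Y ω)) ⁻¹' T)
      = P.map (fun ω => (X ω, Y ω)) (Prod.fst ⁻¹' s ∩ T) :=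
        (Measure.map_apply (hX.prodMk hY) hsT).symm
    _ = ∫⁻ a, P.map Y (Prod.mk a ⁻¹' (Prod.fst ⁻¹' s ∩ T)) ∂P.map X := by
        rw [(indepFun_iff_map_prod_eq_prod_map_map hX.aemeasurable hY.aemeasurable).1 hXY,
          Measure.prod_apply hsT]
    _ ≤ ∫⁻ a, s.indicator (fun _ => ε) a ∂P.map X := lintegral_mono fun a => by
        by_cases ha : a ∈ s
        · simpa [Set.preimage_preimage, ha] using hε a ha
        · simp [Set.preimage_preimage, ha]
    _ = ε * P (X ⁻¹' s) := by rw [lintegral_indicator_const hs, Measure.map_apply hX hs]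

lemma ofReal_one_sub_le_cond_compl {A B : Set Ω} (hA : MeasurableSet A) (hB : MeasurableSet B)
    (hA0 : P A ≠ 0) {ε : ℝ} (hε : 0 ≤ ε) (h : P (A ∩ B) ≤ ENNReal.ofReal ε * P A) :
    ENNReal.ofReal (1 - ε) ≤ P[Bᶜ | A] := by
  have := cond_isProbabilityMeasure (μ := P) hA0
  have hcond : P[B | A] ≤ ENNReal.ofReal ε := by
    rw [cond_apply hA, ENNReal.inv_mul_le_iff hA0 (measure_ne_top P A), mul_comm]
    exact h
  rw [prob_compl_eq_one_sub hB, ENNReal.ofReal_sub _ hε, ENNReal.ofReal_one]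
  exact tsub_le_tsub_left hcond 1

end Probability

namespace UMDA

variable {n lam : ℕ}

lemma measurable_sample :
    Measurable fun q : (Fin n → ℝ) × (Fin lam → Fin n → ℝ) => sample q.1 q.2 :=
  measurable_pi_lambda _ fun k => measurable_pi_lambda _ fun j =>
    measurable_to_bool <| by
      convert measurableSet_lt (f := fun q : (Fin n → ℝ) × (Fin lam → Fin n → ℝ) => q.2 k j)
        (g := fun q => q.1 j) (by fun_prop) (by fun_prop) using 1
      ext q
      simp [sample]

lemma measurable_freq_iSup_comap {Ω : Type*} [MeasurableSpace Ω] (f : (Fin n → Bool) → ℝ)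
    (μ : ℕ) {step : ℕ → Ω → (Fin lam → Fin n → ℝ) × Equiv.Perm (Fin lam)} (t : ℕ) :
    Measurable[⨆ j ∈ Set.Iio t, MeasurableSpace.comap (step j) inferInstance]
      (freq f μ step t) := by
  induction t with
  | zero => exact measurable_const
  | succ t ih =>
    have hupdate : Measurable fun y : (Fin lam → Fin n → Bool) × Equiv.Perm (Fin lam) =>
        update f μ y.1 y.2 := Measurable.of_discrete
    have hstep : Measurable fun q : (Fin n → ℝ) × (Fin lam → Fin n → ℝ) × Equiv.Perm (Fin lam) =>
        (sample q.1 q.2.1, q.2.2) :=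
      (measurable_sample.comp (measurable_fst.prodMk measurable_snd.fst)).prodMk
        measurable_snd.snd
    refine (hupdate.comp hstep).comp (f := fun ω => (freq f μ step t ω, step t ω))
      (Measurable.prodMk ?_ ?_)
    · exact ih.mono (biSup_mono fun j hj => (Set.mem_Iio.1 hj).trans (Nat.lt_succ_self t)) le_rfl
    · exact (comap_measurable (step t)).mono
        (le_iSup₂ (f := fun j (_ : j ∈ Set.Iio (t + 1)) => MeasurableSpace.comap (step j) _) t
          (Nat.lt_succ_self t)) le_rfl

variable {Ω : Type*} [MeasureSpace Ω] (M : Model n lam Ω) (f : (Fin n → Bool) → ℝ) (μ t : ℕ)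

lemma Model.measurable_freq : Measurable (freq f μ M.step t) :=
  (measurable_freq_iSup_comap f μ t).mono
    (iSup₂_le fun j _ => (M.measurable_step j).comap_le) le_rfl

lemma Model.indepFun_freq_step : IndepFun (freq f μ M.step t) (M.step t) := by
  have h := indep_iSup_of_disjoint (fun j => (M.measurable_step j).comap_le) M.indep_step.iIndep
    (S := Set.Iio t) (T := {t}) (Set.disjoint_singleton_right.2 (lt_irrefl t))
  rw [_root_.iSup_singleton] at h
  rw [IndepFun_iff_Indep]
  exact indep_of_indep_of_le_left h (measurable_freq_iSup_comap f μ t).comap_le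

lemma Model.map_step_fst :
    (ℙ : Measure Ω).map (fun ω => (M.step t ω).1)
      = Measure.pi fun _ : Fin lam => Measure.pi fun _ : Fin n => unif01 := by
  rw [show (fun ω => (M.step t ω).1) = Prod.fst ∘ M.step t from rfl,
    ← Measure.map_map measurable_fst (M.measurable_step t), M.law_step t, stepLaw,
    Measure.map_fst_prod, measure_univ, one_smul]

lemma Model.measurable_pop : Measurable (pop f μ M.step t) :=
  measurable_sample.comp ((M.measurable_freq f μ t).prodMk
    (measurable_fst.comp (M.measurable_step t)))

lemma Model.measure_inter_selectionRelevant_le [IsFiniteMeasure (ℙ : Measure Ω)]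
    {P : Set (Fin n → ℝ)} (hP : MeasurableSet P) (k : Fin n) {ε : ℝ≥0∞}
    (hε : ∀ p ∈ P, (Measure.pi fun _ : Fin lam => Measure.pi fun _ : Fin n => unif01)
        {u | SelectionRelevant μ (sample p u) k} ≤ ε) :
    ℙ (freq f μ M.step t ⁻¹' P ∩ {ω | SelectionRelevant μ (pop f μ M.step t ω) k})
      ≤ ε * ℙ (freq f μ M.step t ⁻¹' P) :=
  measure_preimage_inter_le_of_indepFun (M.measurable_freq f μ t)
    (measurable_fst.comp (M.measurable_step t))
    ((M.indepFun_freq_step f μ t).comp measurable_id measurable_fst) hP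
    (measurable_sample (MeasurableSet.of_discrete (s := {x | SelectionRelevant μ x k})))
    fun p hp => M.map_step_fst t ▸ hε p hp

end UMDA

/-- Lemma 4.3: let `δ ∈ (0,1)` and `ζ = (3/4)(1+δ)`; consider the
UMDA optimizing LeadingOnes with `μ ≥ 6((1+δ)/δ²) ln n` and `lam ≥ μ·max{1, 1/ζ}`, and
let `d = ⌈log_{4/3}(ζ lam/μ)⌉`.  Consider an iteration `t` such that position `i` is
critical and all frequencies at positions `> i` are at most `3/4` (we condition on this
event `A`, assumed to have positive probability).  Then, with (conditional) probability
at least `1 - 1/n²`, every selection-relevant (1-based) position `k + 1` in iteration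
`t` is at most `min{n, (i+1)+d+1}`; in particular the maximum selection-relevant
position is at most this value.  (`i : Fin n` is the 0-based index of the 1-based
position `i + 1 ∈ [n]`.) -/
theorem umda_selection_relevant_bound
    (n : ℕ) (hn : 2 ≤ n) (δ : ℝ) (hδ : δ ∈ Set.Ioo (0 : ℝ) 1)
    (μ lam : ℕ)
    (hμ : 6 * ((1 + δ) / δ ^ 2) * Real.log n ≤ μ)
    (Ω : Type) (_ : MeasureSpace Ω) (_ : IsProbabilityMeasure (ℙ : Measure Ω))
    (M : Model n lam Ω) (t : ℕ) (i : Fin n)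
    (A : Set Ω)
    (hA : A = {ω : Ω | IsCritical (freq (lo n) μ M.step t ω) i ∧
        ∀ j : Fin n, i < j → freq (lo n) μ M.step t ω j ≤ 3 / 4})
    (hA0 : ℙ A ≠ 0) :
    ENNReal.ofReal (1 - 1 / (n : ℝ) ^ 2) ≤
      ℙ[{ω : Ω | ∀ k : Fin n,
          SelectionRelevant μ (pop (lo n) μ M.step t ω) k →
            (k : ℕ) + 1 ≤
              min n ((i : ℕ) + 1 +
                ⌈Real.logb (4 / 3) (3 / 4 * (1 + δ) * lam / μ)⌉₊ + 1)} | A] := by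
  obtain ⟨hδ0, hδ1⟩ := hδ
  generalize hd : ⌈Real.logb (4 / 3) (3 / 4 * (1 + δ) * lam / μ)⌉₊ = d
  have hdlog : Real.logb (4 / 3) (3 / 4 * (1 + δ) * lam / μ) ≤ d := hd ▸ Nat.le_ceil _
  set P : Set (Fin n → ℝ) := {p | IsCritical p i ∧ ∀ j, i < j → p j ≤ 3 / 4}
  have hP : MeasurableSet P := by
    simp only [P, IsCritical, Set.ofPred_and, Set.ofPred_forall]
    measurability
  have hAm : MeasurableSet A := hA ▸ M.measurable_freq (lo n) μ t hP
  have hε : (0 : ℝ) ≤ 1 / (n : ℝ) ^ 2 := by positivity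
  by_cases hk : (i : ℕ) + 1 + d + 1 < n
  · refine (ofReal_one_sub_le_cond_compl hAm
      (M.measurable_pop (lo n) μ t
        (MeasurableSet.of_discrete (s := {x | SelectionRelevant μ x ⟨_, hk⟩})))
      hA0 hε ?_).trans (measure_mono fun ω hω k hk' => ?_)
    · rw [hA]
      exact M.measure_inter_selectionRelevant_le (lo n) μ t hP _ fun p hp =>
        measure_selectionRelevant_le_one_div_sq hn hδ0 hδ1 hμ hdlog hp.2 rfl
    · by_contra hlt
      exact hω (hk'.mono (Fin.le_def.2 (by simp only; omega)))
  · exact (ofReal_one_sub_le_cond_compl hAm MeasurableSet.empty hA0 hε (by simp)).trans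
      (measure_mono fun ω _ k _ => by omega)
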